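/- For every positive integer n, the coefficients c_d = (λ(d)/d) · (φ(gcd(d, n/d)) / gcd(d, n/d)) · ψ(n/d) satisfy ∑_{d ∣ n} c_d = n, as rational numbers. -/

import Mathlib

/-! Viewed as a function `c(d, e)` of the pair `(d, e) = (d, n / d)`, the coefficient
factors over coprime pairs, so `n ↦ ∑_{d ∣ n} c(d, n / d)` is multiplicative and only
`n = p ^ (m + 1)` needs to be treated. There the inner terms telescope,
`c(p ^ i, p ^ (m + 1 - i)) = p ^ (m - 2i) - p ^ (m + 2 - 2i)` for `0 < i ≤ m`, summing to
`p ^ (-m) - p ^ m`, while the outer ones are `ψ(p ^ (m + 1)) = p ^ (m + 1) + p ^ m` and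
`λ(p ^ (m + 1)) / p ^ (m + 1) = -p ^ (-m)`. -/

/-- The Dedekind psi function `ψ(m) = m · ∏_{p prime, p ∣ m} (1 + 1/p)`, as a rational number. -/
def dedekindPsi (m : ℕ) : ℚ := (m : ℚ) * ∏ p ∈ m.primeFactors, (1 + 1 / (p : ℚ))

/-- `λ(d) = ∏_{p prime, p ∣ d} (−p)`, with `λ(1) = 1`. -/
def lambdaProd (d : ℕ) : ℚ := ∏ p ∈ d.primeFactors, (-(p : ℚ))

open Finset

theorem Nat.Coprime.sum_divisors_mul_of_map_mul {R : Type*} [CommSemiring R] {m n : ℕ}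
    (F : ℕ → ℕ → R)
    (hF : ∀ a b c d : ℕ, (a * c).Coprime (b * d) → F (a * b) (c * d) = F a c * F b d)
    (hmn : m.Coprime n) :
    ∑ k ∈ (m * n).divisors, F k (m * n / k) =
      (∑ a ∈ m.divisors, F a (m / a)) * ∑ b ∈ n.divisors, F b (n / b) := by
  rw [hmn.divisors_mul, sum_map, sum_mul_sum, ← sum_product']
  refine (sum_attach (m.divisors ×ˢ n.divisors) fun k => F (k.1 * k.2) (m * n / (k.1 * k.2))
    ).trans (sum_congr rfl fun ⟨a, b⟩ hab => ?_)
  obtain ⟨ha, hb⟩ := mem_product.1 hab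
  replace ha : a ∣ m := Nat.dvd_of_mem_divisors ha
  replace hb : b ∣ n := Nat.dvd_of_mem_divisors hb
  rw [← Nat.div_mul_div_comm ha hb]
  apply hF
  rwa [Nat.mul_div_cancel' ha, Nat.mul_div_cancel' hb]

theorem Nat.Coprime.gcd_mul_mul {a b c d : ℕ} (h : (a * c).Coprime (b * d)) :
    (a * b).gcd (c * d) = a.gcd c * b.gcd d := by
  rw [h.coprime_mul_left.coprime_mul_left_right.gcd_mul,
    h.coprime_mul_left.coprime_mul_right_right.symm.gcd_mul_right_cancel,
    h.coprime_mul_right.coprime_mul_left_right.gcd_mul_left_cancel]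

theorem lambdaProd_mul {a b : ℕ} (h : a.Coprime b) :
    lambdaProd (a * b) = lambdaProd a * lambdaProd b := by
  rw [lambdaProd, h.primeFactors_mul, prod_union h.disjoint_primeFactors, lambdaProd, lambdaProd]

theorem dedekindPsi_mul {a b : ℕ} (h : a.Coprime b) :
    dedekindPsi (a * b) = dedekindPsi a * dedekindPsi b := by
  rw [dedekindPsi, h.primeFactors_mul, prod_union h.disjoint_primeFactors, dedekindPsi,
    dedekindPsi, Nat.cast_mul]
  ring

theorem lambdaProd_prime_pow {p k : ℕ} (hp : p.Prime) (hk : k ≠ 0) :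
    lambdaProd (p ^ k) = -p := by
  rw [lambdaProd, Nat.primeFactors_prime_pow hk hp, prod_singleton]

theorem dedekindPsi_prime_pow {p k : ℕ} (hp : p.Prime) (hk : k ≠ 0) :
    dedekindPsi (p ^ k) = p ^ k * (1 + (p : ℚ)⁻¹) := by
  rw [dedekindPsi, Nat.primeFactors_prime_pow hk hp, prod_singleton, one_div, Nat.cast_pow]

theorem totient_prime_pow_div_self {p k : ℕ} (hp : p.Prime) (hk : k ≠ 0) :
    (Nat.totient (p ^ k) : ℚ) / (p ^ k : ℕ) = 1 - (p : ℚ)⁻¹ := by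
  have hpk : ((p ^ k : ℕ) : ℚ) ≠ 0 := by exact_mod_cast (pow_pos hp.pos k).ne'
  rw [Nat.totient_eq_mul_prod_factors, Nat.primeFactors_prime_pow hk hp, prod_singleton,
    mul_div_cancel_left₀ _ hpk]

def dimensionCoeff (d e : ℕ) : ℚ :=
  lambdaProd d / d * ((Nat.totient (d.gcd e) : ℚ) / (d.gcd e : ℕ)) * dedekindPsi e

theorem dimensionCoeff_mul {a b c d : ℕ} (h : (a * c).Coprime (b * d)) :
    dimensionCoeff (a * b) (c * d) = dimensionCoeff a c * dimensionCoeff b d := by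
  have hab : a.Coprime b := h.coprime_mul_right.coprime_mul_right_right
  have hcd : c.Coprime d := h.coprime_mul_left.coprime_mul_left_right
  have hg : (a.gcd c).Coprime (b.gcd d) :=
    (hab.coprime_dvd_left (a.gcd_dvd_left c)).coprime_dvd_right (b.gcd_dvd_left d)
  rw [dimensionCoeff, h.gcd_mul_mul, lambdaProd_mul hab, dedekindPsi_mul hcd, Nat.totient_mul hg,
    dimensionCoeff, dimensionCoeff]
  push_cast
  ring

theorem dimensionCoeff_one_left (e : ℕ) : dimensionCoeff 1 e = dedekindPsi e := by
  simp [dimensionCoeff, lambdaProd]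

theorem dimensionCoeff_one_right (d : ℕ) : dimensionCoeff d 1 = lambdaProd d / d := by
  simp [dimensionCoeff, dedekindPsi]

theorem dimensionCoeff_prime_pow {p i j : ℕ} (hp : p.Prime) (hi : i ≠ 0) (hj : j ≠ 0) :
    dimensionCoeff (p ^ i) (p ^ j) =
      (p : ℚ) ^ ((j : ℤ) - i - 1) - (p : ℚ) ^ ((j : ℤ) - i + 1) := by
  have hp0 : (p : ℚ) ≠ 0 := by exact_mod_cast hp.ne_zero
  obtain ⟨l, hl, hgcd⟩ : ∃ l ≠ 0, (p ^ i).gcd (p ^ j) = p ^ l := by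
    rcases le_total i j with h | h
    · exact ⟨i, hi, Nat.gcd_eq_left (pow_dvd_pow p h)⟩
    · exact ⟨j, hj, Nat.gcd_eq_right (pow_dvd_pow p h)⟩
  rw [dimensionCoeff, lambdaProd_prime_pow hp hi, hgcd, totient_prime_pow_div_self hp hl,
    dedekindPsi_prime_pow hp hj, zpow_sub₀ hp0, zpow_sub₀ hp0, zpow_add₀ hp0, zpow_sub₀ hp0]
  push_cast
  simp only [zpow_natCast, zpow_one]
  field_simp
  ring

theorem sum_divisors_prime_pow_dimensionCoeff {p : ℕ} (hp : p.Prime) (k : ℕ) :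
    ∑ d ∈ (p ^ k).divisors, dimensionCoeff d (p ^ k / d) = p ^ k := by
  rcases k with - | m
  · simp [dimensionCoeff_one_left, dedekindPsi]
  have hp0 : (p : ℚ) ≠ 0 := by exact_mod_cast hp.ne_zero
  have telescoping : ∀ j ∈ range m, dimensionCoeff (p ^ (j + 1)) (p ^ (m + 1) / p ^ (j + 1)) =
      (p : ℚ) ^ ((m : ℤ) - 2 * ↑(j + 1)) - (p : ℚ) ^ ((m : ℤ) - 2 * j) := by
    intro j hj
    have hjm := mem_range.1 hj
    rw [Nat.pow_div (by omega) hp.pos, dimensionCoeff_prime_pow hp (by omega) (by omega)]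
    push_cast [Nat.sub_sub, hjm.le]
    ring_nf
  rw [Nat.sum_divisors_prime_pow hp, sum_range_succ, sum_range_succ', sum_congr rfl telescoping,
    sum_range_sub (fun j => (p : ℚ) ^ ((m : ℤ) - 2 * j)), Nat.div_self (pow_pos hp.pos _),
    pow_zero, Nat.div_one, dimensionCoeff_one_left, dimensionCoeff_one_right,
    lambdaProd_prime_pow hp m.add_one_ne_zero, dedekindPsi_prime_pow hp m.add_one_ne_zero]
  push_cast
  rw [show (m : ℤ) - 2 * m = -m by ring, sub_zero, zpow_neg, zpow_natCast]
  field_simp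
  ring

theorem sum_dimension_formula_coefficients_general (n : ℕ) :
    ∑ d ∈ n.divisors,
      (lambdaProd d / (d : ℚ)) *
        ((Nat.totient (Nat.gcd d (n / d)) : ℚ) / ((Nat.gcd d (n / d) : ℕ) : ℚ)) *
        dedekindPsi (n / d) = (n : ℚ) := by
  change ∑ d ∈ n.divisors, dimensionCoeff d (n / d) = n
  induction n using Nat.recOnPrimeCoprime with
  | zero => simp
  | prime_pow p k hp => exact_mod_cast sum_divisors_prime_pow_dimensionCoeff hp k
  | coprime a b _ _ hab ha hb =>
    rw [hab.sum_divisors_mul_of_map_mul dimensionCoeff fun _ _ _ _ => dimensionCoeff_mul, ha, hb,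
      Nat.cast_mul]

/-- The coefficients `c_d = (λ(d)/d) · (φ(gcd(d, n/d)) / gcd(d, n/d)) · ψ(n/d)` of the
genus-zero dimension formula satisfy `∑_{d ∣ n} c_d = n`. -/
theorem sum_dimension_formula_coefficients (n : ℕ) (hn : 0 < n) :
    ∑ d ∈ n.divisors,
      (lambdaProd d / (d : ℚ)) *
        ((Nat.totient (Nat.gcd d (n / d)) : ℚ) / ((Nat.gcd d (n / d) : ℕ) : ℚ)) *
        dedekindPsi (n / d) = (n : ℚ) :=
  sum_dimension_formula_coefficients_general n
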